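/- arXiv:2111.13147 — 3 statements merged into one kernel-verified Lean document; each statement's English description precedes it below -/
import Mathlib

section
/- Let W be the right-angled Coxeter group of a finite graph (𝓕, E) and let λ : 𝓕 → (ℤ/2ℤ)³ be a map with induced homomorphism φ : W → (ℤ/2ℤ)³, φ(s_F) = λ(F). Assume F₁, F₂, F₃ ∈ 𝓕 are pairwise adjacent (E(Fᵢ,Fⱼ) for i ≠ j) and that (λ(F₁), λ(F₂), λ(F₃)) is a basis of (ℤ/2ℤ)³. Define the section σ : (ℤ/2ℤ)³ → W by σ(a₁λ(F₁) + a₂λ(F₂) + a₃λ(F₃)) = s_{F₁}^{a₁} s_{F₂}^{a₂} s_{F₃}^{a₃} for a₁, a₂, a₃ ∈ {0,1}. Then the kernel of φ is generated by the elements σ(g) · s_F · σ(g + λ(F))⁻¹ for F ∈ 𝓕 and g ∈ (ℤ/2ℤ)³. -/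
/-- The relators of the right-angled Coxeter group of the graph `(𝓕, E)`:
`s_F ^ 2` for every `F` and `(s_F * s_F') ^ 2` for every adjacent pair. -/
def racgRels {𝓕 : Type} (E : 𝓕 → 𝓕 → Prop) : Set (FreeGroup 𝓕) :=
  {r | (∃ F, r = FreeGroup.of F ^ 2) ∨
    ∃ F F', E F F' ∧ r = (FreeGroup.of F * FreeGroup.of F') ^ 2}

/-- The section `σ : (ℤ/2)³ → W`,
`σ(a₁ λ(F₁) + a₂ λ(F₂) + a₃ λ(F₃)) = s_{F₁}^{a₁} s_{F₂}^{a₂} s_{F₃}^{a₃}` with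
`aᵢ ∈ {0,1}`, expressed via the coordinates of `g` in the basis `b` with `b i = λ(Fᵢ)`. -/
noncomputable def racgSection {𝓕 : Type} (E : 𝓕 → 𝓕 → Prop) (F : Fin 3 → 𝓕)
    (b : Module.Basis (Fin 3) (ZMod 2) (Fin 3 → ZMod 2)) (g : Fin 3 → ZMod 2) :
    PresentedGroup (racgRels E) :=
  PresentedGroup.of (F 0) ^ (b.repr g 0).val *
  PresentedGroup.of (F 1) ^ (b.repr g 1).val *
  PresentedGroup.of (F 2) ^ (b.repr g 2).val

/-- If `F₁, F₂, F₃` are pairwise adjacent and `(λ(F₁), λ(F₂), λ(F₃))` is a basis of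
`(ℤ/2)³`, then the kernel of the induced homomorphism `φ : W → (ℤ/2)³` is generated by
the elements `σ(g) · s_F · σ(g + λ(F))⁻¹`, `F ∈ 𝓕`, `g ∈ (ℤ/2)³`. -/
theorem stmt1 (𝓕 : Type) [Fintype 𝓕] (E : 𝓕 → 𝓕 → Prop)
    (hsymm : Symmetric E) (hirr : Irreflexive E)
    (lam : 𝓕 → (Fin 3 → ZMod 2)) (F : Fin 3 → 𝓕)
    (hadj : ∀ i j, i ≠ j → E (F i) (F j))
    (b : Module.Basis (Fin 3) (ZMod 2) (Fin 3 → ZMod 2)) (hb : ∀ i, b i = lam (F i))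
    (φ : PresentedGroup (racgRels E) →* Multiplicative (Fin 3 → ZMod 2))
    (hφ : ∀ f, φ (PresentedGroup.of f) = Multiplicative.ofAdd (lam f)) :
    φ.ker = Subgroup.closure
      {x | ∃ (f : 𝓕) (g : Fin 3 → ZMod 2),
        x = racgSection E F b g * PresentedGroup.of f *
          (racgSection E F b (g + lam f))⁻¹} := by
  -- φ ∘ σ = ofAdd
  have hσ : ∀ g, φ (racgSection E F b g) = Multiplicative.ofAdd g := by
    intro g
    have : ∀ i : Fin 3, φ (PresentedGroup.of (F i) ^ (b.repr g i).val)
        = Multiplicative.ofAdd ((b.repr g i) • (b i)) := by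
      intro i
      rw [map_pow, hφ, hb, ← ofAdd_nsmul]
      congr 1
      rw [← Nat.cast_smul_eq_nsmul (ZMod 2), ZMod.natCast_val, ZMod.cast_id]
    rw [racgSection, map_mul, map_mul, this 0, this 1, this 2, ← ofAdd_add, ← ofAdd_add]
    congr 1
    have := b.sum_repr g
    rw [Fin.sum_univ_three] at this
    exact this
  have hσ0 : racgSection E F b 0 = 1 := by
    simp [racgSection]
  set K := Subgroup.closure
      {x | ∃ (f : 𝓕) (g : Fin 3 → ZMod 2),
        x = racgSection E F b g * PresentedGroup.of f *
          (racgSection E F b (g + lam f))⁻¹} with hK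
  apply le_antisymm
  · -- ker ≤ closure
    intro x hx
    have key : ∀ y : PresentedGroup (racgRels E), ∀ g : Fin 3 → ZMod 2,
        racgSection E F b g * y * (racgSection E F b (g + (φ y).toAdd))⁻¹ ∈ K := by
      intro y
      have hy : y ∈ Subgroup.closure (Set.range (PresentedGroup.of (rels := racgRels E))) := by
        rw [PresentedGroup.closure_range_of]; trivial
      induction hy using Subgroup.closure_induction with
      | mem z hz =>
        obtain ⟨f, rfl⟩ := hz
        intro g
        apply Subgroup.subset_closure
        refine ⟨f, g, ?_⟩
        rw [hφ]
        simp
      | one =>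
        intro g
        simp only [map_one, toAdd_one, add_zero, mul_one]
        simpa using K.one_mem
      | mul z w hz hw ihz ihw =>
        intro g
        have h1 := ihz g
        have h2 := ihw (g + (φ z).toAdd)
        have := K.mul_mem h1 h2
        rw [map_mul, toAdd_mul, ← add_assoc]
        convert this using 1
        group
      | inv z hz ihz =>
        intro g
        have := K.inv_mem (ihz (g + (φ z⁻¹).toAdd))
        rw [map_inv, toAdd_inv] at this ⊢
        rw [show g + -(φ z).toAdd + (φ z).toAdd = g by abel] at this
        convert this using 1
        group
    have := key x 0
    rw [MonoidHom.mem_ker] at hx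
    rw [hx] at this
    simpa [hσ0] using this
  · rw [hK, Subgroup.closure_le]
    rintro x ⟨f, g, rfl⟩
    rw [SetLike.mem_coe, MonoidHom.mem_ker, map_mul, map_mul, map_inv, hσ, hσ, hφ]
    simp [← ofAdd_add]
end

section
/- Let W be the right-angled Coxeter group of a finite graph (𝓕, E) and let λ : 𝓕 → (ℤ/2ℤ)³ be a map with induced homomorphism φ : W → (ℤ/2ℤ)³, φ(s_F) = λ(F). Assume F₁, F₂, F₃ ∈ 𝓕 are pairwise adjacent and (λ(F₁), λ(F₂), λ(F₃)) is a basis of (ℤ/2ℤ)³, and define σ : (ℤ/2ℤ)³ → W by σ(a₁λ(F₁) + a₂λ(F₂) + a₃λ(F₃)) = s_{F₁}^{a₁} s_{F₂}^{a₂} s_{F₃}^{a₃} for a₁, a₂, a₃ ∈ {0,1}. Then ker φ is isomorphic to the presented group with generating set 𝓕 × (ℤ/2ℤ)³, writing x_{F,g} for the generator indexed by (F,g), and with relators: (i) x_{F, g+λ(F)} · x_{F,g} for all F ∈ 𝓕 and g ∈ (ℤ/2ℤ)³; (ii) x_{F,g} · x_{F', g+λ(F)} · x_{F, g+λ(F')}⁻¹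 · x_{F', g}⁻¹ for all pairs with E(F,F') and all g ∈ (ℤ/2ℤ)³; (iii) x_{Fᵢ, g} for i ∈ {1,2,3} and all g ∈ (ℤ/2ℤ)³. Moreover, an isomorphism is induced by sending x_{F,g} to σ(g) · s_F · σ(g + λ(F))⁻¹ ∈ ker φ. -/
/-- The relators of the Wu–Yu presentation, on the generating set `𝓕 × (ℤ/2)³`
(`x_{F,g}` is the generator indexed by `(F, g)`):
(i)  `x_{F, g+λ(F)} · x_{F,g}`;
(ii) `x_{F,g} · x_{F', g+λ(F)} · x_{F, g+λ(F')}⁻¹ · x_{F', g}⁻¹` for adjacent `F, F'`;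
(iii) `x_{Fᵢ, g}` for `i ∈ {1,2,3}`. -/
def wuYuRels {𝓕 : Type} (E : 𝓕 → 𝓕 → Prop) (lam : 𝓕 → (Fin 3 → ZMod 2))
    (F : Fin 3 → 𝓕) : Set (FreeGroup (𝓕 × (Fin 3 → ZMod 2))) :=
  {r | (∃ f g, r = FreeGroup.of (f, g + lam f) * FreeGroup.of (f, g)) ∨
    (∃ f f' g, E f f' ∧
      r = FreeGroup.of (f, g) * FreeGroup.of (f', g + lam f) *
        (FreeGroup.of (f, g + lam f'))⁻¹ * (FreeGroup.of (f', g))⁻¹) ∨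
    ∃ (i : Fin 3) (g : Fin 3 → ZMod 2), r = FreeGroup.of (F i, g)}

namespace WuYuAux

lemma relator_one {α : Type*} {rels : Set (FreeGroup α)} {r : FreeGroup α} (h : r ∈ rels) :
    PresentedGroup.mk rels r = 1 :=
  (QuotientGroup.eq_one_iff r).mpr (Subgroup.subset_normalClosure h)

variable {𝓕 : Type} {E : 𝓕 → 𝓕 → Prop} {lam : 𝓕 → (Fin 3 → ZMod 2)} {F : Fin 3 → 𝓕}
  {b : Module.Basis (Fin 3) (ZMod 2) (Fin 3 → ZMod 2)}

lemma of_sq (f : 𝓕) : (PresentedGroup.of f : PresentedGroup (racgRels E)) ^ 2 = 1 := by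
  have h := relator_one (rels := racgRels E) (r := FreeGroup.of f ^ 2) (Or.inl ⟨f, rfl⟩)
  rw [map_pow] at h; exact h

lemma of_mul_sq {f f' : 𝓕} (hE : E f f') :
    ((PresentedGroup.of f : PresentedGroup (racgRels E)) * PresentedGroup.of f') ^ 2 = 1 := by
  have h := relator_one (rels := racgRels E)
    (r := (FreeGroup.of f * FreeGroup.of f') ^ 2) (Or.inr ⟨f, f', hE, rfl⟩)
  rw [map_pow, map_mul] at h; exact h

lemma inv_of_sq {G : Type*} [Group G] {x : G} (h : x ^ 2 = 1) : x⁻¹ = x :=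
  inv_eq_of_mul_eq_one_right (by rw [← pow_two]; exact h)

lemma of_comm {f f' : 𝓕} (hE : E f f') :
    Commute (PresentedGroup.of f : PresentedGroup (racgRels E)) (PresentedGroup.of f') := by
  show PresentedGroup.of f * PresentedGroup.of f' = PresentedGroup.of f' * PresentedGroup.of f
  conv_rhs => rw [← inv_of_sq (of_sq f'), ← inv_of_sq (of_sq f)]
  rw [← mul_inv_rev, inv_of_sq (of_mul_sq hE)]

lemma pow_val_add {G : Type*} [Group G] {x : G} (h : x ^ 2 = 1) (u v : ZMod 2) :
    x ^ (u + v).val = x ^ u.val * x ^ v.val := by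
  rw [ZMod.val_add, ← pow_eq_pow_mod _ h, pow_add]

lemma rearrange {G : Type*} [Group G] {p q r s t u : G}
    (hqr : q * r = r * q) (hqt : q * t = t * q) (hst : s * t = t * s) :
    p * q * (r * s) * (t * u) = p * r * t * (q * s * u) := by
  simp only [mul_assoc]
  rw [← mul_assoc q r, hqr, mul_assoc, ← mul_assoc s t, hst, mul_assoc, ← mul_assoc q t, hqt,
    mul_assoc]

lemma sigma_mul (hadj : ∀ i j, i ≠ j → E (F i) (F j)) (g₁ g₂ : Fin 3 → ZMod 2) :
    racgSection E F b (g₁ + g₂) = racgSection E F b g₁ * racgSection E F b g₂ := by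
  have hc : ∀ (i j : Fin 3), i ≠ j → ∀ m n : ℕ,
      (PresentedGroup.of (F i) : PresentedGroup (racgRels E)) ^ m * PresentedGroup.of (F j) ^ n
        = PresentedGroup.of (F j) ^ n * PresentedGroup.of (F i) ^ m :=
    fun i j h m n => ((of_comm (hadj i j h)).pow_pow m n).eq
  unfold racgSection
  rw [map_add]
  simp only [Finsupp.coe_add, Pi.add_apply]
  rw [pow_val_add (of_sq _), pow_val_add (of_sq _), pow_val_add (of_sq _)]
  exact rearrange (hc 0 1 (by decide) _ _) (hc 0 2 (by decide) _ _) (hc 1 2 (by decide) _ _)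

lemma sigma_zero : racgSection E F b 0 = 1 := by
  unfold racgSection
  simp [map_zero]

lemma sigma_basis (i : Fin 3) : racgSection E F b (b i) = PresentedGroup.of (F i) := by
  unfold racgSection
  rw [Module.Basis.repr_self]
  have h0 : ((0 : ZMod 2)).val = 0 := rfl
  have h1 : ((1 : ZMod 2)).val = 1 := rfl
  fin_cases i <;> simp [Finsupp.single_apply, h0, h1]


lemma sigma_push {H : Type*} [Group H] (χ : PresentedGroup (racgRels E) →* H)
    (ρ : Multiplicative (Fin 3 → ZMod 2) →* H)
    (h : ∀ i, χ (PresentedGroup.of (F i)) = ρ (Multiplicative.ofAdd (b i)))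
    (g : Fin 3 → ZMod 2) :
    χ (racgSection E F b g) = ρ (Multiplicative.ofAdd g) := by
  have key : ∀ (i : Fin 3) (n : ℕ),
      χ (PresentedGroup.of (F i)) ^ n = ρ (Multiplicative.ofAdd (n • b i)) := by
    intro i n
    rw [h i, ← map_pow, ← ofAdd_nsmul]
  unfold racgSection
  rw [map_mul, map_mul, map_pow, map_pow, map_pow, key, key, key, ← map_mul, ← map_mul,
    ← ofAdd_add, ← ofAdd_add]
  have hsum : ∀ i : Fin 3, (b.repr g i).val • b i = b.repr g i • b i := by
    intro i
    rw [← Nat.cast_smul_eq_nsmul (ZMod 2), ZMod.natCast_val, ZMod.cast_id]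
  rw [hsum 0, hsum 1, hsum 2]
  have hg := b.sum_repr g
  rw [Fin.sum_univ_three] at hg
  rw [hg]

/-! ### The Wu–Yu presented group -/

lemma wu_rel1 (f : 𝓕) (g : Fin 3 → ZMod 2) :
    (PresentedGroup.of (f, g + lam f) : PresentedGroup (wuYuRels E lam F)) *
      PresentedGroup.of (f, g) = 1 := by
  have h := relator_one (rels := wuYuRels E lam F)
    (r := FreeGroup.of (f, g + lam f) * FreeGroup.of (f, g)) (Or.inl ⟨f, g, rfl⟩)
  rw [map_mul] at h; exact h

lemma two_add_self (g : Fin 3 → ZMod 2) : g + g = 0 :=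
  funext fun i => by
    have : ∀ a : ZMod 2, a + a = 0 := by decide
    exact this (g i)

lemma add_add_self (g h : Fin 3 → ZMod 2) : g + h + h = g := by
  rw [add_assoc, two_add_self, add_zero]

lemma wu_rel1' (f : 𝓕) (g : Fin 3 → ZMod 2) :
    (PresentedGroup.of (f, g) : PresentedGroup (wuYuRels E lam F)) *
      PresentedGroup.of (f, g + lam f) = 1 := by
  have h := wu_rel1 (E := E) (lam := lam) (F := F) f (g + lam f)
  rwa [add_add_self] at h

lemma wu_rel2 {f f' : 𝓕} (hE : E f f') (g : Fin 3 → ZMod 2) :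
    (PresentedGroup.of (f, g) : PresentedGroup (wuYuRels E lam F)) *
      PresentedGroup.of (f', g + lam f) * (PresentedGroup.of (f, g + lam f'))⁻¹ *
      (PresentedGroup.of (f', g))⁻¹ = 1 := by
  have h := relator_one (rels := wuYuRels E lam F)
    (r := FreeGroup.of (f, g) * FreeGroup.of (f', g + lam f) *
      (FreeGroup.of (f, g + lam f'))⁻¹ * (FreeGroup.of (f', g))⁻¹)
    (Or.inr (Or.inl ⟨f, f', g, hE, rfl⟩))
  simp only [map_mul, map_inv] at h; exact h

lemma wu_rel3 (i : Fin 3) (g : Fin 3 → ZMod 2) :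
    (PresentedGroup.of (F i, g) : PresentedGroup (wuYuRels E lam F)) = 1 :=
  relator_one (Or.inr (Or.inr ⟨i, g, rfl⟩))

/-! ### Translation automorphisms -/

def trHom (E : 𝓕 → 𝓕 → Prop) (lam : 𝓕 → (Fin 3 → ZMod 2)) (F : Fin 3 → 𝓕)
    (g' : Fin 3 → ZMod 2) :
    PresentedGroup (wuYuRels E lam F) →* PresentedGroup (wuYuRels E lam F) :=
  PresentedGroup.toGroup (f := fun p => PresentedGroup.of (p.1, p.2 + g')) (by
    rintro r (⟨f, g, rfl⟩ | ⟨f, f', g, hE, rfl⟩ | ⟨i, g, rfl⟩) <;>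
      simp only [map_mul, map_inv, FreeGroup.lift_apply_of]
    · rw [add_right_comm]
      exact wu_rel1 f (g + g')
    · rw [add_right_comm g (lam f) g', add_right_comm g (lam f') g']
      exact wu_rel2 hE (g + g')
    · exact wu_rel3 i (g + g'))

lemma trHom_of (g' : Fin 3 → ZMod 2) (f : 𝓕) (g : Fin 3 → ZMod 2) :
    trHom E lam F g' (PresentedGroup.of (f, g)) = PresentedGroup.of (f, g + g') :=
  PresentedGroup.toGroup.of _

lemma trHom_trHom (g₁ g₂ : Fin 3 → ZMod 2) (k : PresentedGroup (wuYuRels E lam F)) :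
    trHom E lam F g₁ (trHom E lam F g₂ k) = trHom E lam F (g₂ + g₁) k := by
  have h : (trHom E lam F g₁).comp (trHom E lam F g₂) = trHom E lam F (g₂ + g₁) := by
    apply PresentedGroup.ext
    rintro ⟨f, g⟩
    simp [trHom_of, add_assoc]
  exact DFunLike.congr_fun h k

lemma trHom_zero (k : PresentedGroup (wuYuRels E lam F)) : trHom E lam F 0 k = k := by
  have h : trHom E lam F 0 = MonoidHom.id _ := by
    apply PresentedGroup.ext
    rintro ⟨f, g⟩
    simp [trHom_of]
  rw [h]; rfl

def trAut (E : 𝓕 → 𝓕 → Prop) (lam : 𝓕 → (Fin 3 → ZMod 2)) (F : Fin 3 → 𝓕) :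
    Multiplicative (Fin 3 → ZMod 2) →* MulAut (PresentedGroup (wuYuRels E lam F)) where
  toFun g :=
    { toFun := trHom E lam F g.toAdd
      invFun := trHom E lam F g.toAdd
      left_inv := fun k => by rw [trHom_trHom, two_add_self, trHom_zero]
      right_inv := fun k => by rw [trHom_trHom, two_add_self, trHom_zero]
      map_mul' := map_mul _ }
  map_one' := MulEquiv.ext fun k => trHom_zero k
  map_mul' g₁ g₂ := MulEquiv.ext fun k => by
    show trHom E lam F (g₁.toAdd + g₂.toAdd) k
      = trHom E lam F g₁.toAdd (trHom E lam F g₂.toAdd k)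
    rw [trHom_trHom, add_comm]

lemma trAut_of (h : Multiplicative (Fin 3 → ZMod 2)) (f : 𝓕) (g : Fin 3 → ZMod 2) :
    trAut E lam F h (PresentedGroup.of (f, g)) = PresentedGroup.of (f, g + h.toAdd) :=
  trHom_of _ _ _


/-! ### θ : W → K ⋊ (ℤ/2)³ -/

lemma lam_cancel (f f' : 𝓕) (lam : 𝓕 → (Fin 3 → ZMod 2)) :
    lam f + (lam f + lam f') = lam f' := by
  rw [← add_assoc, two_add_self, zero_add]

def theta (E : 𝓕 → 𝓕 → Prop) (lam : 𝓕 → (Fin 3 → ZMod 2)) (F : Fin 3 → 𝓕) :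
    PresentedGroup (racgRels E) →*
      (PresentedGroup (wuYuRels E lam F) ⋊[trAut E lam F] Multiplicative (Fin 3 → ZMod 2)) :=
  PresentedGroup.toGroup
    (f := fun f => ⟨PresentedGroup.of (f, 0), Multiplicative.ofAdd (lam f)⟩) (by
    rintro r (⟨f, rfl⟩ | ⟨f, f', hE, rfl⟩) <;>
      simp only [map_pow, map_mul, FreeGroup.lift_apply_of, pow_two]
    · refine SemidirectProduct.ext ?_ ?_
      · show PresentedGroup.of (f, 0) * trAut E lam F (Multiplicative.ofAdd (lam f))
            (PresentedGroup.of (f, 0)) = 1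
        rw [trAut_of]
        exact wu_rel1' f 0
      · show Multiplicative.ofAdd (lam f) * Multiplicative.ofAdd (lam f) = 1
        rw [← ofAdd_add, two_add_self, ofAdd_zero]
    · refine SemidirectProduct.ext ?_ ?_
      · simp only [SemidirectProduct.mul_left, SemidirectProduct.mul_right, trAut_of, map_mul,
          SemidirectProduct.one_left, toAdd_ofAdd, toAdd_mul, MulAut.mul_apply]
        simp only [zero_add, lam_cancel]
        -- x_{f,0} x_{f',λf} (x_{f,λf+λf'} x_{f',λf'}) = 1
        have h2 := wu_rel2 (lam := lam) (F := F) hE 0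
        rw [mul_inv_eq_one, mul_inv_eq_iff_eq_mul] at h2
        simp only [zero_add] at h2
        rw [h2, show lam f + lam f' = lam f' + lam f from add_comm _ _, mul_assoc,
          ← mul_assoc (PresentedGroup.of (f, lam f')), wu_rel1' f (lam f'), one_mul]
        rw [add_add_self]
        simpa using wu_rel1' (E := E) (lam := lam) (F := F) f' 0
      · show Multiplicative.ofAdd (lam f + lam f' + (lam f + lam f')) = 1
        rw [two_add_self, ofAdd_zero])

lemma theta_of (f : 𝓕) :
    theta E lam F (PresentedGroup.of f)
      = ⟨PresentedGroup.of (f, 0), Multiplicative.ofAdd (lam f)⟩ :=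
  PresentedGroup.toGroup.of _

lemma theta_right (φ : PresentedGroup (racgRels E) →* Multiplicative (Fin 3 → ZMod 2))
    (hφ : ∀ f, φ (PresentedGroup.of f) = Multiplicative.ofAdd (lam f))
    (x : PresentedGroup (racgRels E)) : (theta E lam F x).right = φ x := by
  have h : SemidirectProduct.rightHom.comp (theta E lam F) = φ := by
    apply PresentedGroup.ext
    intro f
    simp only [MonoidHom.comp_apply, theta_of, hφ]
    rfl
  exact DFunLike.congr_fun h x

lemma theta_sigma (hb : ∀ i, b i = lam (F i)) (g : Fin 3 → ZMod 2) :
    theta E lam F (racgSection E F b g) = SemidirectProduct.inr (Multiplicative.ofAdd g) := by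
  refine sigma_push _ SemidirectProduct.inr (fun i => ?_) g
  rw [theta_of]
  refine SemidirectProduct.ext ?_ ?_
  · show PresentedGroup.of (F i, 0) = _
    rw [wu_rel3, SemidirectProduct.left_inr]
  · show Multiplicative.ofAdd (lam (F i)) = _
    rw [← hb, SemidirectProduct.right_inr]

/-! ### ψ₀ : K → W -/

lemma conj_helper {G : Type*} [Group G] (A B x : G) (h : x * x = 1) :
    A * x * B⁻¹ * (B * x * A⁻¹) = 1 := by
  have e : A * x * B⁻¹ * (B * x * A⁻¹) = A * (x * x) * A⁻¹ := by group
  rw [e, h, mul_one, mul_inv_cancel]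

lemma conj_helper2 {G : Type*} [Group G] (a B C D x y : G) (h : x * y * x⁻¹ * y⁻¹ = 1) :
    a * x * B⁻¹ * (B * y * C⁻¹) * (D * x * C⁻¹)⁻¹ * (a * y * D⁻¹)⁻¹ = 1 := by
  have e : a * x * B⁻¹ * (B * y * C⁻¹) * (D * x * C⁻¹)⁻¹ * (a * y * D⁻¹)⁻¹
      = a * (x * y * x⁻¹ * y⁻¹) * a⁻¹ := by group
  rw [e, h, mul_one, mul_inv_cancel]

lemma commutator_one {G : Type*} [Group G] {x y : G} (h : Commute x y) :
    x * y * x⁻¹ * y⁻¹ = 1 := by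
  rw [h.eq]; group

noncomputable def psi0 (E : 𝓕 → 𝓕 → Prop) (lam : 𝓕 → (Fin 3 → ZMod 2)) (F : Fin 3 → 𝓕)
    (b : Module.Basis (Fin 3) (ZMod 2) (Fin 3 → ZMod 2))
    (hadj : ∀ i j, i ≠ j → E (F i) (F j)) (hb : ∀ i, b i = lam (F i)) :
    PresentedGroup (wuYuRels E lam F) →* PresentedGroup (racgRels E) :=
  PresentedGroup.toGroup
    (f := fun p => racgSection E F b p.2 * PresentedGroup.of p.1 *
      (racgSection E F b (p.2 + lam p.1))⁻¹) (by
    rintro r (⟨f, g, rfl⟩ | ⟨f, f', g, hE, rfl⟩ | ⟨i, g, rfl⟩) <;>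
      simp only [map_mul, map_inv, FreeGroup.lift_apply_of]
    · rw [add_add_self]
      exact conj_helper _ _ _ (by rw [← pow_two]; exact of_sq f)
    · rw [show g + lam f' + lam f = g + lam f + lam f' from add_right_comm _ _ _]
      exact conj_helper2 _ _ _ _ _ _ (commutator_one (of_comm hE))
    · rw [← hb i, sigma_mul hadj, sigma_basis]
      group)

lemma psi0_of (hadj : ∀ i j, i ≠ j → E (F i) (F j)) (hb : ∀ i, b i = lam (F i))
    (f : 𝓕) (g : Fin 3 → ZMod 2) :
    psi0 E lam F b hadj hb (PresentedGroup.of (f, g))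
      = racgSection E F b g * PresentedGroup.of f * (racgSection E F b (g + lam f))⁻¹ :=
  PresentedGroup.toGroup.of _


lemma phi_section (φ : PresentedGroup (racgRels E) →* Multiplicative (Fin 3 → ZMod 2))
    (hφ : ∀ f, φ (PresentedGroup.of f) = Multiplicative.ofAdd (lam f))
    (hb : ∀ i, b i = lam (F i)) (g : Fin 3 → ZMod 2) :
    φ (racgSection E F b g) = Multiplicative.ofAdd g :=
  sigma_push φ (MonoidHom.id _) (fun i => by rw [hφ, ← hb]; rfl) g

lemma psi0_ker (hadj : ∀ i j, i ≠ j → E (F i) (F j)) (hb : ∀ i, b i = lam (F i))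
    (φ : PresentedGroup (racgRels E) →* Multiplicative (Fin 3 → ZMod 2))
    (hφ : ∀ f, φ (PresentedGroup.of f) = Multiplicative.ofAdd (lam f))
    (k : PresentedGroup (wuYuRels E lam F)) :
    φ (psi0 E lam F b hadj hb k) = 1 := by
  have h : φ.comp (psi0 E lam F b hadj hb) = 1 := by
    apply PresentedGroup.ext
    rintro ⟨f, g⟩
    simp only [MonoidHom.comp_apply, MonoidHom.one_apply, psi0_of]
    rw [map_mul, map_mul, map_inv, hφ, phi_section φ hφ hb, phi_section φ hφ hb,
      ← ofAdd_add, ← ofAdd_neg, ← ofAdd_add, add_neg_cancel, ofAdd_zero]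
  exact DFunLike.congr_fun h k

lemma psi0_tr (hadj : ∀ i j, i ≠ j → E (F i) (F j)) (hb : ∀ i, b i = lam (F i))
    (g' : Fin 3 → ZMod 2) (k : PresentedGroup (wuYuRels E lam F)) :
    psi0 E lam F b hadj hb (trHom E lam F g' k)
      = racgSection E F b g' * psi0 E lam F b hadj hb k * (racgSection E F b g')⁻¹ := by
  have h : (psi0 E lam F b hadj hb).comp (trHom E lam F g')
      = ((MulAut.conj (racgSection E F b g')).toMonoidHom).comp (psi0 E lam F b hadj hb) := by
    apply PresentedGroup.ext
    rintro ⟨f, g⟩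
    simp only [MonoidHom.comp_apply, trHom_of, psi0_of, MulEquiv.coe_toMonoidHom,
      MulAut.conj_apply]
    rw [show g + g' = g' + g from add_comm _ _, sigma_mul hadj,
      show g' + g + lam f = g' + (g + lam f) from add_assoc _ _ _, sigma_mul hadj,
      mul_inv_rev]
    group
  exact DFunLike.congr_fun h k

noncomputable def xi (hadj : ∀ i j, i ≠ j → E (F i) (F j)) (hb : ∀ i, b i = lam (F i)) :
    (PresentedGroup (wuYuRels E lam F) ⋊[trAut E lam F] Multiplicative (Fin 3 → ZMod 2)) →*
      PresentedGroup (racgRels E) :=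
  MonoidHom.mk' (fun p => psi0 E lam F b hadj hb p.left * racgSection E F b p.right.toAdd) (by
    intro a a'
    simp only [SemidirectProduct.mul_left, SemidirectProduct.mul_right, map_mul]
    rw [show (trAut E lam F a.right) a'.left = trHom E lam F a.right.toAdd a'.left from rfl,
      psi0_tr hadj hb,
      show (a.right * a'.right).toAdd = a.right.toAdd + a'.right.toAdd from rfl,
      sigma_mul hadj]
    group)

lemma xi_theta (hadj : ∀ i j, i ≠ j → E (F i) (F j)) (hb : ∀ i, b i = lam (F i)) :
    (xi hadj hb).comp (theta E lam F) = MonoidHom.id (PresentedGroup (racgRels E)) := by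
  apply PresentedGroup.ext
  intro f
  simp only [MonoidHom.comp_apply, MonoidHom.id_apply, theta_of]
  show psi0 E lam F b hadj hb (PresentedGroup.of (f, 0)) *
      racgSection E F b (Multiplicative.ofAdd (lam f)).toAdd = PresentedGroup.of f
  rw [psi0_of, toAdd_ofAdd, sigma_zero, one_mul, zero_add]
  group

end WuYuAux

open WuYuAux in
/-- If `F₁, F₂, F₃` are pairwise adjacent and `(λ(F₁), λ(F₂), λ(F₃))` is a basis of
`(ℤ/2)³`, then `ker φ` is isomorphic to the presented group with generators `x_{F,g}`,
`(F,g) ∈ 𝓕 × (ℤ/2)³`, and the Wu–Yu relators, via the isomorphism induced by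
`x_{F,g} ↦ σ(g) · s_F · σ(g + λ(F))⁻¹`. -/
theorem stmt2 (𝓕 : Type) [Fintype 𝓕] (E : 𝓕 → 𝓕 → Prop)
    (hsymm : Symmetric E) (hirr : Irreflexive E)
    (lam : 𝓕 → (Fin 3 → ZMod 2)) (F : Fin 3 → 𝓕)
    (hadj : ∀ i j, i ≠ j → E (F i) (F j))
    (b : Module.Basis (Fin 3) (ZMod 2) (Fin 3 → ZMod 2)) (hb : ∀ i, b i = lam (F i))
    (φ : PresentedGroup (racgRels E) →* Multiplicative (Fin 3 → ZMod 2))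
    (hφ : ∀ f, φ (PresentedGroup.of f) = Multiplicative.ofAdd (lam f)) :
    ∃ iso : PresentedGroup (wuYuRels E lam F) ≃* φ.ker,
      ∀ (f : 𝓕) (g : Fin 3 → ZMod 2),
        ((iso (PresentedGroup.of (f, g)) : φ.ker) : PresentedGroup (racgRels E)) =
          racgSection E F b g * PresentedGroup.of f *
            (racgSection E F b (g + lam f))⁻¹ := by
  classical
  let ψ : PresentedGroup (wuYuRels E lam F) →* φ.ker :=
    (psi0 E lam F b hadj hb).codRestrict φ.ker
      (fun k => MonoidHom.mem_ker.mpr (psi0_ker hadj hb φ hφ k))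
  have hψcoe : ∀ k, ((ψ k : φ.ker) : PresentedGroup (racgRels E)) = psi0 E lam F b hadj hb k :=
    fun k => rfl
  let θ' : φ.ker →* PresentedGroup (wuYuRels E lam F) :=
    { toFun := fun w => (theta E lam F (w : PresentedGroup (racgRels E))).left
      map_one' := by simp
      map_mul' := fun w w' => by
        rw [MulMemClass.coe_mul, map_mul, SemidirectProduct.mul_left]
        rw [theta_right φ hφ, MonoidHom.mem_ker.mp w.2, map_one, MulAut.one_apply] }
  have h1 : ∀ k, θ' (ψ k) = k := by
    have hcomp : θ'.comp ψ = MonoidHom.id _ := by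
      apply PresentedGroup.ext
      rintro ⟨f, g⟩
      simp only [MonoidHom.comp_apply, MonoidHom.id_apply]
      show (theta E lam F (psi0 E lam F b hadj hb (PresentedGroup.of (f, g)))).left = _
      rw [psi0_of, map_mul, map_mul, map_inv, theta_sigma hb, theta_sigma hb, theta_of]
      rw [← map_inv SemidirectProduct.inr]
      simp only [SemidirectProduct.mul_left, SemidirectProduct.mul_right,
        SemidirectProduct.left_inr, SemidirectProduct.right_inr, map_one, one_mul, mul_one,
        toAdd_ofAdd]
      rw [show ((trAut E lam F) (Multiplicative.ofAdd g)) (PresentedGroup.of (f, 0))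
          = PresentedGroup.of (f, 0 + g) from trAut_of _ _ _, zero_add]
    intro k; exact DFunLike.congr_fun hcomp k
  have h2 : ∀ w, ψ (θ' w) = w := by
    intro w
    apply Subtype.ext
    rw [hψcoe]
    have hx := DFunLike.congr_fun (xi_theta (b := b) hadj hb) (w : PresentedGroup (racgRels E))
    have hx' : psi0 E lam F b hadj hb ((theta E lam F (w : PresentedGroup (racgRels E))).left) *
        racgSection E F b ((theta E lam F (w : PresentedGroup (racgRels E))).right).toAdd
        = (w : PresentedGroup (racgRels E)) := hx
    rwa [theta_right φ hφ, MonoidHom.mem_ker.mp w.2,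
      show ((1 : Multiplicative (Fin 3 → ZMod 2))).toAdd = 0 from rfl, sigma_zero, mul_one]
      at hx'
  refine ⟨MonoidHom.toMulEquiv ψ θ' (MonoidHom.ext h1) (MonoidHom.ext h2), ?_⟩
  intro f g
  show ((ψ (PresentedGroup.of (f, g)) : φ.ker) : PresentedGroup (racgRels E)) = _
  rw [hψcoe, psi0_of]
end

section
/- Let G be the presented group on nine generators α, β, γ, δ, ε, η, χ, θ, φ with the nine relators: (1) γαβγ⁻¹αβ⁻¹, (2) εβδε⁻¹βδ⁻¹, (3) ηγχγ⁻¹ηχ⁻¹, (4) εα⁻¹γ⁻¹φ⁻¹γαεφ⁻¹, (5) ηαβ⁻¹φ⁻¹βα⁻¹ηφ⁻¹, (6) χδ⁻¹α⁻¹χ⁻¹αδ⁻¹, (7) θ⁻¹χδ⁻¹β⁻¹ε⁻¹δχ⁻¹θ⁻¹εβ, (8) αδ⁻¹θγ⁻¹η⁻¹θδα⁻¹γ⁻¹η⁻¹, (9) φε⁻¹βχ⁻¹θ⁻¹δβ⁻¹φε⁻¹δχ⁻¹θ⁻¹. Then the abelianization of G is isomorphic to (ℤ/2ℤ)⁹.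 In particular the abelianization of G is finite, so G has no surjection onto ℤ. -/
/-- The nine relators of the presentation of the fundamental group of the dodecahedral
space, on the nine generators `α, β, γ, δ, ε, η, χ, θ, φ` (indexed by `0, …, 8`). -/
def dodecRels : Set (FreeGroup (Fin 9)) :=
  let α := FreeGroup.of (0 : Fin 9)
  let β := FreeGroup.of (1 : Fin 9)
  let γ := FreeGroup.of (2 : Fin 9)
  let δ := FreeGroup.of (3 : Fin 9)
  let ε := FreeGroup.of (4 : Fin 9)
  let η := FreeGroup.of (5 : Fin 9)
  let χ := FreeGroup.of (6 : Fin 9)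
  let θ := FreeGroup.of (7 : Fin 9)
  let φ := FreeGroup.of (8 : Fin 9)
  {γ * α * β * γ⁻¹ * α * β⁻¹,
   ε * β * δ * ε⁻¹ * β * δ⁻¹,
   η * γ * χ * γ⁻¹ * η * χ⁻¹,
   ε * α⁻¹ * γ⁻¹ * φ⁻¹ * γ * α * ε * φ⁻¹,
   η * α * β⁻¹ * φ⁻¹ * β * α⁻¹ * η * φ⁻¹,
   χ * δ⁻¹ * α⁻¹ * χ⁻¹ * α * δ⁻¹,
   θ⁻¹ * χ * δ⁻¹ * β⁻¹ * ε⁻¹ * δ * χ⁻¹ * θ⁻¹ * ε * β,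
   α * δ⁻¹ * θ * γ⁻¹ * η⁻¹ * θ * δ * α⁻¹ * γ⁻¹ * η⁻¹,
   φ * ε⁻¹ * β * χ⁻¹ * θ⁻¹ * δ * β⁻¹ * φ * ε⁻¹ * δ * χ⁻¹ * θ⁻¹}

namespace Dodec

abbrev A := Abelianization (PresentedGroup dodecRels)
abbrev M2 := Multiplicative (Fin 9 → ZMod 2)

noncomputable def φh : FreeGroup (Fin 9) →* A :=
  (Abelianization.of).comp (PresentedGroup.mk dodecRels)

lemma φh_rel {r : FreeGroup (Fin 9)} (hr : r ∈ dodecRels) : φh r = 1 := by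
  have h1 : PresentedGroup.mk dodecRels r = 1 :=
    (QuotientGroup.eq_one_iff r).mpr (Subgroup.subset_normalClosure hr)
  show Abelianization.of (PresentedGroup.mk dodecRels r) = 1
  rw [h1, map_one]

noncomputable def p : Fin 9 → A := fun i => φh (FreeGroup.of i)

set_option maxHeartbeats 1000000 in
lemma sq_one : ∀ i, p i ^ 2 = 1 := by
  have h1 : p 2 * p 0 * p 1 * (p 2)⁻¹ * p 0 * (p 1)⁻¹ = 1 := by
    simpa only [map_mul, map_inv, p] using φh_rel (show
      FreeGroup.of (2:Fin 9) * .of 0 * .of 1 * (.of 2)⁻¹ * .of 0 * (.of 1)⁻¹ ∈ dodecRels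
      by simp [dodecRels])
  have h2 : p 4 * p 1 * p 3 * (p 4)⁻¹ * p 1 * (p 3)⁻¹ = 1 := by
    simpa only [map_mul, map_inv, p] using φh_rel (show
      FreeGroup.of (4:Fin 9) * .of 1 * .of 3 * (.of 4)⁻¹ * .of 1 * (.of 3)⁻¹ ∈ dodecRels
      by simp [dodecRels])
  have h3 : p 5 * p 2 * p 6 * (p 2)⁻¹ * p 5 * (p 6)⁻¹ = 1 := by
    simpa only [map_mul, map_inv, p] using φh_rel (show
      FreeGroup.of (5:Fin 9) * .of 2 * .of 6 * (.of 2)⁻¹ * .of 5 * (.of 6)⁻¹ ∈ dodecRels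
      by simp [dodecRels])
  have h4 : p 4 * (p 0)⁻¹ * (p 2)⁻¹ * (p 8)⁻¹ * p 2 * p 0 * p 4 * (p 8)⁻¹ = 1 := by
    simpa only [map_mul, map_inv, p] using φh_rel (show
      FreeGroup.of (4:Fin 9) * (.of 0)⁻¹ * (.of 2)⁻¹ * (.of 8)⁻¹ * .of 2 * .of 0 * .of 4 * (.of 8)⁻¹ ∈ dodecRels
      by simp [dodecRels])
  have h5 : p 5 * p 0 * (p 1)⁻¹ * (p 8)⁻¹ * p 1 * (p 0)⁻¹ * p 5 * (p 8)⁻¹ = 1 := by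
    simpa only [map_mul, map_inv, p] using φh_rel (show
      FreeGroup.of (5:Fin 9) * .of 0 * (.of 1)⁻¹ * (.of 8)⁻¹ * .of 1 * (.of 0)⁻¹ * .of 5 * (.of 8)⁻¹ ∈ dodecRels
      by simp [dodecRels])
  have h6 : p 6 * (p 3)⁻¹ * (p 0)⁻¹ * (p 6)⁻¹ * p 0 * (p 3)⁻¹ = 1 := by
    simpa only [map_mul, map_inv, p] using φh_rel (show
      FreeGroup.of (6:Fin 9) * (.of 3)⁻¹ * (.of 0)⁻¹ * (.of 6)⁻¹ * .of 0 * (.of 3)⁻¹ ∈ dodecRels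
      by simp [dodecRels])
  have h7 : (p 7)⁻¹ * p 6 * (p 3)⁻¹ * (p 1)⁻¹ * (p 4)⁻¹ * p 3 * (p 6)⁻¹ * (p 7)⁻¹ * p 4 * p 1 = 1 := by
    simpa only [map_mul, map_inv, p] using φh_rel (show
      (FreeGroup.of (7:Fin 9))⁻¹ * .of 6 * (.of 3)⁻¹ * (.of 1)⁻¹ * (.of 4)⁻¹ * .of 3 * (.of 6)⁻¹ * (.of 7)⁻¹ * .of 4 * .of 1 ∈ dodecRels
      by simp [dodecRels])
  have h8 : p 0 * (p 3)⁻¹ * p 7 * (p 2)⁻¹ * (p 5)⁻¹ * p 7 * p 3 * (p 0)⁻¹ * (p 2)⁻¹ * (p 5)⁻¹ = 1 := by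
    simpa only [map_mul, map_inv, p] using φh_rel (show
      FreeGroup.of (0:Fin 9) * (.of 3)⁻¹ * .of 7 * (.of 2)⁻¹ * (.of 5)⁻¹ * .of 7 * .of 3 * (.of 0)⁻¹ * (.of 2)⁻¹ * (.of 5)⁻¹ ∈ dodecRels
      by simp [dodecRels])
  have h9 : p 8 * (p 4)⁻¹ * p 1 * (p 6)⁻¹ * (p 7)⁻¹ * p 3 * (p 1)⁻¹ * p 8 * (p 4)⁻¹ * p 3 * (p 6)⁻¹ * (p 7)⁻¹ = 1 := by
    simpa only [map_mul, map_inv, p] using φh_rel (show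
      FreeGroup.of (8:Fin 9) * (.of 4)⁻¹ * .of 1 * (.of 6)⁻¹ * (.of 7)⁻¹ * .of 3 * (.of 1)⁻¹ * .of 8 * (.of 4)⁻¹ * .of 3 * (.of 6)⁻¹ * (.of 7)⁻¹ ∈ dodecRels
      by simp [dodecRels])
  have e0 : p 0 ^ 2 = 1 := by
    calc p 0 ^ 2 = p 2 * p 0 * p 1 * (p 2)⁻¹ * p 0 * (p 1)⁻¹ := by
          apply Additive.ofMul.injective
          simp only [ofMul_mul, ofMul_inv, ofMul_pow]; abel
      _ = 1 := h1
  have e1 : p 1 ^ 2 = 1 := by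
    calc p 1 ^ 2 = p 4 * p 1 * p 3 * (p 4)⁻¹ * p 1 * (p 3)⁻¹ := by
          apply Additive.ofMul.injective
          simp only [ofMul_mul, ofMul_inv, ofMul_pow]; abel
      _ = 1 := h2
  have e5 : p 5 ^ 2 = 1 := by
    calc p 5 ^ 2 = p 5 * p 2 * p 6 * (p 2)⁻¹ * p 5 * (p 6)⁻¹ := by
          apply Additive.ofMul.injective
          simp only [ofMul_mul, ofMul_inv, ofMul_pow]; abel
      _ = 1 := h3
  have e3 : p 3 ^ 2 = 1 := by
    calc p 3 ^ 2 = (p 6 * (p 3)⁻¹ * (p 0)⁻¹ * (p 6)⁻¹ * p 0 * (p 3)⁻¹)⁻¹ := by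
          apply Additive.ofMul.injective
          simp only [ofMul_mul, ofMul_inv, ofMul_pow]; abel
      _ = 1 := by rw [h6, inv_one]
  have e7 : p 7 ^ 2 = 1 := by
    calc p 7 ^ 2 = ((p 7)⁻¹ * p 6 * (p 3)⁻¹ * (p 1)⁻¹ * (p 4)⁻¹ * p 3 * (p 6)⁻¹ * (p 7)⁻¹ * p 4 * p 1)⁻¹ := by
          apply Additive.ofMul.injective
          simp only [ofMul_mul, ofMul_inv, ofMul_pow]; abel
      _ = 1 := by rw [h7, inv_one]
  have e8 : p 8 ^ 2 = 1 := by
    calc p 8 ^ 2 = p 5 ^ 2 * (p 5 * p 0 * (p 1)⁻¹ * (p 8)⁻¹ * p 1 * (p 0)⁻¹ * p 5 * (p 8)⁻¹)⁻¹ := by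
          apply Additive.ofMul.injective
          simp only [ofMul_mul, ofMul_inv, ofMul_pow]; abel
      _ = 1 := by rw [h5, e5, inv_one, one_mul]
  have e4 : p 4 ^ 2 = 1 := by
    calc p 4 ^ 2 = p 8 ^ 2 * (p 4 * (p 0)⁻¹ * (p 2)⁻¹ * (p 8)⁻¹ * p 2 * p 0 * p 4 * (p 8)⁻¹) := by
          apply Additive.ofMul.injective
          simp only [ofMul_mul, ofMul_inv, ofMul_pow]; abel
      _ = 1 := by rw [h4, e8, one_mul]
  have e2 : p 2 ^ 2 = 1 := by
    calc p 2 ^ 2 = p 7 ^ 2 * (p 5 ^ 2)⁻¹ *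
          (p 0 * (p 3)⁻¹ * p 7 * (p 2)⁻¹ * (p 5)⁻¹ * p 7 * p 3 * (p 0)⁻¹ * (p 2)⁻¹ * (p 5)⁻¹)⁻¹ := by
          apply Additive.ofMul.injective
          simp only [ofMul_mul, ofMul_inv, ofMul_pow]; abel
      _ = 1 := by rw [h8, e7, e5]; simp
  have e6 : p 6 ^ 2 = 1 := by
    calc p 6 ^ 2 = p 8 ^ 2 * (p 4 ^ 2)⁻¹ * p 3 ^ 2 * (p 7 ^ 2)⁻¹ *
          (p 8 * (p 4)⁻¹ * p 1 * (p 6)⁻¹ * (p 7)⁻¹ * p 3 * (p 1)⁻¹ * p 8 * (p 4)⁻¹ * p 3 * (p 6)⁻¹ * (p 7)⁻¹)⁻¹ := by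
          apply Additive.ofMul.injective
          simp only [ofMul_mul, ofMul_inv, ofMul_pow]; abel
      _ = 1 := by rw [h9, e8, e4, e3, e7, inv_one]; simp
  intro i
  fin_cases i <;> assumption

def Fgen : Fin 9 → M2 := fun i => Multiplicative.ofAdd (Pi.single i 1)
lemma rels_ok : ∀ r ∈ dodecRels, FreeGroup.lift Fgen r = 1 := by
  intro r hr
  simp only [dodecRels, Set.mem_insert_iff, Set.mem_singleton_iff] at hr
  rcases hr with h|h|h|h|h|h|h|h|h <;> subst h <;>
    simp only [map_mul, map_inv, FreeGroup.lift_apply_of] <;> decide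
lemma p_def : ∀ i, p i = Abelianization.of (PresentedGroup.of i) := fun _ => rfl

noncomputable def f : A →* M2 :=
  Abelianization.lift (PresentedGroup.toGroup rels_ok)

lemma f_p (i : Fin 9) : f (p i) = Fgen i := by
  rw [p_def]
  show Abelianization.lift _ (Abelianization.of _) = _
  rw [Abelianization.lift_apply_of, PresentedGroup.toGroup.of]

lemma two_smul_zero (i : Fin 9) : (zmultiplesHom (Additive A) (Additive.ofMul (p i))) (2:ℤ) = 0 := by
  have h2 : p i ^ (2:ℤ) = 1 := by
    rw [show ((2:ℤ)) = ((2:ℕ):ℤ) from rfl, zpow_natCast, sq_one]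
  rw [zmultiplesHom_apply, ← ofMul_zpow, h2, ofMul_one]

noncomputable def g' : (Fin 9 → ZMod 2) →+ Additive A :=
  ∑ i : Fin 9, (ZMod.lift 2 ⟨zmultiplesHom (Additive A) (Additive.ofMul (p i)),
      two_smul_zero i⟩).comp (Pi.evalAddMonoidHom (fun _ => ZMod 2) i)

noncomputable def g : M2 →* A := AddMonoidHom.toMultiplicativeLeft g'

lemma g_single (i : Fin 9) (x : ZMod 2) :
    g (Multiplicative.ofAdd (Pi.single i x)) = p i ^ (x.val) := by
  show Additive.toMul (g' (Pi.single i x)) = _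
  rw [g', AddMonoidHom.finset_sum_apply]
  have : ∀ j : Fin 9, ((ZMod.lift 2 ⟨zmultiplesHom (Additive A) (Additive.ofMul (p j)),
      two_smul_zero j⟩).comp (Pi.evalAddMonoidHom (fun _ => ZMod 2) j)) (Pi.single i x)
      = if j = i then ((x.val : ℤ)) • Additive.ofMul (p j) else 0 := by
    intro j
    by_cases h : j = i
    · subst h
      simp only [AddMonoidHom.comp_apply, Pi.evalAddMonoidHom_apply, Pi.single_eq_same, if_pos rfl]
      rw [show x = ((x.val : ℤ) : ZMod 2) by push_cast [ZMod.natCast_val, ZMod.cast_id]; rfl]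
      rw [ZMod.lift_coe]
      simp [ZMod.val_cast_of_lt, ZMod.val_lt]
    · simp [AddMonoidHom.comp_apply, Pi.evalAddMonoidHom_apply, Pi.single_eq_of_ne h, h]
  rw [Finset.sum_congr rfl (fun j _ => this j), Finset.sum_ite_eq' Finset.univ i]
  simp only [Finset.mem_univ, if_pos, ← ofMul_zpow, toMul_ofMul, zpow_natCast]

lemma g_f : ∀ a : A, g (f a) = a := by
  have : g.comp f = MonoidHom.id A := by
    apply Abelianization.hom_ext
    apply PresentedGroup.ext
    intro i
    show g (f (Abelianization.of (PresentedGroup.of i))) = Abelianization.of (PresentedGroup.of i)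
    rw [← p_def, f_p, Fgen, g_single, show (1:ZMod 2).val = 1 from rfl, pow_one]
  exact fun a => DFunLike.congr_fun this a

lemma f_g : ∀ v : M2, f (g v) = v := by
  intro v
  have hv : v = ∏ i : Fin 9, Multiplicative.ofAdd (Pi.single i (Multiplicative.toAdd v i)) := by
    rw [← ofAdd_sum]
    congr 1
    exact (Finset.univ_sum_single (Multiplicative.toAdd v)).symm
  rw [hv, map_prod, map_prod]
  congr 1
  funext i
  rw [g_single, map_pow, f_p, Fgen, ← ofAdd_nsmul]
  congr 1
  rw [← Pi.single_smul]
  congr 1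
  simp [ZMod.natCast_val, ZMod.cast_id]

noncomputable def e : A ≃* M2 :=
  MulEquiv.ofBijective f ⟨Function.LeftInverse.injective g_f,
    Function.RightInverse.surjective f_g⟩

end Dodec

/-- The abelianization of the fundamental group of the dodecahedral space is `(ℤ/2)⁹`;
in particular it is finite, so the group has no surjection onto `ℤ`. -/
theorem stmt4 :
    Nonempty (Abelianization (PresentedGroup dodecRels) ≃*
      Multiplicative (Fin 9 → ZMod 2)) ∧
    Finite (Abelianization (PresentedGroup dodecRels)) ∧
    ∀ ψ : PresentedGroup dodecRels →* Multiplicative ℤ, ¬ Function.Surjective ψ := by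
  have hfin : Finite (Abelianization (PresentedGroup dodecRels)) :=
    Finite.of_equiv _ Dodec.e.symm.toEquiv
  refine ⟨⟨Dodec.e⟩, hfin, ?_⟩
  intro ψ hψ
  have hsurj : Function.Surjective (Abelianization.lift ψ) := by
    intro y
    obtain ⟨x, hx⟩ := hψ y
    exact ⟨Abelianization.of x, by rw [Abelianization.lift_apply_of, hx]⟩
  have : Finite (Multiplicative ℤ) := Finite.of_surjective _ hsurj
  exact not_finite (Multiplicative ℤ)
end
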